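/- Every finite-dimensional complex vector space V equipped with a structure of a dagger Frobenius right-involution monoid in the category of finite-dimensional Hilbert spaces admits a norm making its underlying *-algebra a C*-algebra. -/

import Mathlib

noncomputable section

namespace QAlg

variable {V : Type*} [NormedAddCommGroup V] [InnerProductSpace ℂ V] [FiniteDimensional ℂ V]

/-- Monoid (unital associative algebra) axioms for a bilinear multiplication `m`
with unit `u` on `V`. -/
def IsMonoidH (m : V →ₗ[ℂ] V →ₗ[ℂ] V) (u : V) : Prop :=
  (∀ a b c : V, m (m a b) c = m a (m b c)) ∧ (∀ a : V, m u a = a) ∧ (∀ a : V, m a u = a)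

/-- The dagger Frobenius conditions `(id ⊗ m) ∘ (m† ⊗ id) = m† ∘ m = (m ⊗ id) ∘ (id ⊗ m†)`,
expressed equivalently via inner products (pairing both sides against elementary
tensors `a ⊗ b` and applying `c ⊗ d`, using the adjoints of one-sided
multiplications to eliminate the comultiplication). -/
def IsDagFrobH (m : V →ₗ[ℂ] V →ₗ[ℂ] V) : Prop :=
  (∀ a b c d : V,
    (inner ℂ (m a (LinearMap.adjoint (m.flip d) b)) c : ℂ) = inner ℂ (m a b) (m c d)) ∧
  (∀ a b c d : V,
    (inner ℂ (m (LinearMap.adjoint (m c) a) b) d : ℂ) = inner ℂ (m a b) (m c d))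

/-! The right regular representation `a ↦ (x ↦ x a)` embeds `V` into `End V`, injectively because
of the unit and anti-multiplicatively by associativity. The Frobenius law makes the adjoint of a
right multiplication commute with all left multiplications, so it is again a right
multiplication, by `st a := (m.flip a)† u`; thus the image is a `†`-closed subalgebra of the
C*-algebra `End V`, and the operator norm pulled back along it is a C*-norm. -/

section RightRegular

variable {m : V →ₗ[ℂ] V →ₗ[ℂ] V}

theorem mul_adjoint_flip_eq_adjoint_flip_mul (hF : IsDagFrobH m) (a b d : V) :
    m a (LinearMap.adjoint (m.flip d) b) = LinearMap.adjoint (m.flip d) (m a b) := by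
  refine ext_inner_right ℂ fun c => ?_
  rw [hF.1 a b c d, LinearMap.adjoint_inner_left]
  rfl

theorem adjoint_flip_eq_flip_adjoint_flip_unit {u : V} (hF : IsDagFrobH m)
    (hunit_right : ∀ a : V, m a u = a) (d : V) :
    LinearMap.adjoint (m.flip d) = m.flip (LinearMap.adjoint (m.flip d) u) := by
  ext x
  simpa [hunit_right] using (mul_adjoint_flip_eq_adjoint_flip_mul hF x u d).symm

variable (m) in
def rightRegular : V →ₗ[ℂ] (V →L[ℂ] V) :=
  (LinearMap.toContinuousLinearMap : (V →ₗ[ℂ] V) ≃ₗ[ℂ] (V →L[ℂ] V)).toLinearMap ∘ₗ m.flip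

@[simp]
theorem rightRegular_apply (a x : V) : rightRegular m a x = m x a := rfl

theorem rightRegular_injective {u : V} (hunit_left : ∀ a : V, m u a = a) :
    Function.Injective (rightRegular m) := fun a b h => by
  simpa [hunit_left] using congr($h u)

theorem rightRegular_mul (hassoc : ∀ a b c : V, m (m a b) c = m a (m b c)) (a b : V) :
    rightRegular m (m a b) = rightRegular m b * rightRegular m a := by
  ext x
  simp [hassoc]

theorem rightRegular_eq_star {st : V → V}
    (hadj : ∀ a : V, LinearMap.adjoint (m.flip a) = m.flip (st a)) (a : V) :
    rightRegular m (st a) = star (rightRegular m a) := by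
  change LinearMap.toContinuousLinearMap (m.flip (st a)) =
    ContinuousLinearMap.adjoint (LinearMap.toContinuousLinearMap (m.flip a))
  rw [← hadj, LinearMap.adjoint_toContinuousLinearMap]

end RightRegular

theorem stmt16 (m : V →ₗ[ℂ] V →ₗ[ℂ] V) (u : V)
    (hM : IsMonoidH m u) (hF : IsDagFrobH m) :
    -- the canonical right involution `st`, characterized by
    -- `(right multiplication by a)† = right multiplication by st a`,
    ∃ st : V → V, (∀ a : V, LinearMap.adjoint (m.flip a) = m.flip (st a)) ∧
    -- admits a norm making the *-algebra `(V, m, u, st)` a C*-algebra: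
    ∃ N : V → ℝ,
      (∀ a : V, 0 ≤ N a) ∧ (∀ a : V, N a = 0 ↔ a = 0) ∧
      (∀ (c : ℂ) (a : V), N (c • a) = ‖c‖ * N a) ∧
      (∀ a b : V, N (a + b) ≤ N a + N b) ∧
      (∀ a b : V, N (m a b) ≤ N a * N b) ∧
      (∀ a : V, N (st a) = N a) ∧
      (∀ a : V, N (m (st a) a) = N a * N a) := by
  obtain ⟨hassoc, hunit_left, hunit_right⟩ := hM
  have hadj := adjoint_flip_eq_flip_adjoint_flip_unit hF hunit_right
  refine ⟨_, hadj, fun a => ‖rightRegular m a‖, fun a => norm_nonneg _, fun a => ?_, fun c a => ?_,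
    fun a b => ?_, fun a b => ?_, fun a => ?_, fun a => ?_⟩ <;> beta_reduce
  · rw [norm_eq_zero, map_eq_zero_iff _ (rightRegular_injective hunit_left)]
  · rw [map_smul, norm_smul]
  · rw [map_add]
    exact norm_add_le _ _
  · rw [rightRegular_mul hassoc, mul_comm ‖_‖]
    exact norm_mul_le _ _
  · rw [rightRegular_eq_star hadj]
    exact norm_star (rightRegular m a)
  · rw [rightRegular_mul hassoc, rightRegular_eq_star hadj]
    exact CStarRing.norm_self_mul_star

end QAlg
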